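/- arXiv:1301.4605 — 3 statements merged into one kernel-verified Lean document; each statement's English description precedes it below -/
import Mathlib

section
/- If ρ₁₂₃ is a positive definite common extension of the compatible pair (ρ₁₂, ρ₂₃), i.e. Tr₃ ρ₁₂₃ = ρ₁₂ and Tr₁ ρ₁₂₃ = ρ₂₃, then there exists ε > 0 such that any other compatible pair (ρ̃₁₂, ρ̃₂₃) with Tr₁ ρ̃₁₂ = Tr₃ ρ̃₂₃ and ‖ρ₁₂ − ρ̃₁₂‖ + ‖ρ₂₃ − ρ̃₂₃‖ < ε also possesses a common extension. -/
/-!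
A positive definite `ρ₁₂₃` dominates `c • 1` for some `c > 0`. For a compatible pair `(σ₁₂, σ₂₃)`
put `Δ₁₂ = ρ₁₂ - σ₁₂`, `Δ₂₃ = ρ₂₃ - σ₂₃`; both have the same middle marginal `Δ₂`. With `τ` the
maximally mixed state, `E = Δ₁₂ ⊗ τ_C + τ_A ⊗ Δ₂₃ - τ_A ⊗ Δ₂ ⊗ τ_C` is Hermitian with marginals
`Δ₁₂` and `Δ₂₃`, and its entrywise ℓ¹ norm is at most `2‖Δ₁₂‖ + ‖Δ₂₃‖`. By Gershgorin this norm
bounds the spectrum of `E`, so `E ≤ c • 1 ≤ ρ₁₂₃` once the pair is close, and `ρ₁₂₃ - E` is a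
common extension of `(σ₁₂, σ₂₃)`.
-/

open Matrix Kronecker BigOperators
open scoped ComplexOrder
noncomputable section

/-- A density matrix: positive semidefinite with trace one. -/
def IsDensityMatrix {n : Type*} [Fintype n] (ρ : Matrix n n ℂ) : Prop :=
  ρ.PosSemidef ∧ ρ.trace = 1

/-- Partial trace over the second (right) tensor factor. -/
def ptraceRight {A B : Type*} [Fintype B] (ρ : Matrix (A × B) (A × B) ℂ) :
    Matrix A A ℂ :=
  Matrix.of fun x y => ∑ k, ρ (x, k) (y, k)

/-- Partial trace over the first (left) tensor factor. -/
def ptraceLeft {A B : Type*} [Fintype A] (ρ : Matrix (A × B) (A × B) ℂ) :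
    Matrix B B ℂ :=
  Matrix.of fun x y => ∑ k, ρ (k, x) (k, y)

/-- Partial trace over the first factor of a tripartite state indexed by `(A × B) × C`. -/
def ptrace1of3 {A B C : Type*} [Fintype A]
    (ρ : Matrix ((A × B) × C) ((A × B) × C) ℂ) : Matrix (B × C) (B × C) ℂ :=
  Matrix.of fun x y => ∑ j, ρ ((j, x.1), x.2) ((j, y.1), y.2)

/-- Partial trace over the first and third factors. -/
def ptrace13 {A B C : Type*} [Fintype A] [Fintype C]
    (ρ : Matrix ((A × B) × C) ((A × B) × C) ℂ) : Matrix B B ℂ :=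
  Matrix.of fun x y => ∑ j, ∑ k, ρ ((j, x), k) ((j, y), k)

/-- The von Neumann entropy `S(ρ) = -Tr (ρ log ρ)`, computed via eigenvalues. -/
def vnEntropy {n : Type*} [Fintype n] [DecidableEq n] (ρ : Matrix n n ℂ) : ℝ :=
  if h : ρ.IsHermitian then -∑ i, h.eigenvalues i * Real.log (h.eigenvalues i) else 0

/-- A fixed norm on matrices (entrywise ℓ¹ norm). -/
def mnorm {n : Type*} [Fintype n] (M : Matrix n n ℂ) : ℝ :=
  ∑ i, ∑ j, ‖M i j‖

open scoped MatrixOrder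

section

variable {A B C n : Type*}

section PartialTrace

lemma ptraceRight_add [Fintype B] (M N : Matrix (A × B) (A × B) ℂ) :
    ptraceRight (M + N) = ptraceRight M + ptraceRight N := by
  ext x y
  simp [ptraceRight, Finset.sum_add_distrib]

lemma ptraceRight_sub [Fintype B] (M N : Matrix (A × B) (A × B) ℂ) :
    ptraceRight (M - N) = ptraceRight M - ptraceRight N := by
  ext x y
  simp [ptraceRight, Finset.sum_sub_distrib]

lemma ptraceLeft_sub [Fintype A] (M N : Matrix (A × B) (A × B) ℂ) :
    ptraceLeft (M - N) = ptraceLeft M - ptraceLeft N := by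
  ext x y
  simp [ptraceLeft, Finset.sum_sub_distrib]

lemma ptrace1of3_add [Fintype A] (M N : Matrix ((A × B) × C) ((A × B) × C) ℂ) :
    ptrace1of3 (M + N) = ptrace1of3 M + ptrace1of3 N := by
  ext x y
  simp [ptrace1of3, Finset.sum_add_distrib]

lemma ptrace1of3_sub [Fintype A] (M N : Matrix ((A × B) × C) ((A × B) × C) ℂ) :
    ptrace1of3 (M - N) = ptrace1of3 M - ptrace1of3 N := by
  ext x y
  simp [ptrace1of3, Finset.sum_sub_distrib]

lemma trace_ptraceRight [Fintype A] [Fintype B] (M : Matrix (A × B) (A × B) ℂ) :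
    (ptraceRight M).trace = M.trace := by
  simp [Matrix.trace, ptraceRight, Fintype.sum_prod_type]

lemma ptraceLeft_ptraceRight [Fintype A] [Fintype C] (M : Matrix ((A × B) × C) ((A × B) × C) ℂ) :
    ptraceLeft (ptraceRight M) = ptraceRight (ptrace1of3 M) := by
  ext x y
  simp only [ptraceLeft, ptraceRight, ptrace1of3, Matrix.of_apply]
  exact Finset.sum_comm

lemma Matrix.IsHermitian.ptraceRight [Fintype B] {M : Matrix (A × B) (A × B) ℂ}
    (hM : M.IsHermitian) : (ptraceRight M).IsHermitian := by
  ext x y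
  simp [_root_.ptraceRight, ← hM.apply (x, _) (y, _)]

lemma Matrix.IsHermitian.ptraceLeft [Fintype A] {M : Matrix (A × B) (A × B) ℂ}
    (hM : M.IsHermitian) : (ptraceLeft M).IsHermitian := by
  ext x y
  simp [_root_.ptraceLeft, ← hM.apply (_, x) (_, y)]

lemma Matrix.IsHermitian.ptrace1of3 [Fintype A] {M : Matrix ((A × B) × C) ((A × B) × C) ℂ}
    (hM : M.IsHermitian) : (ptrace1of3 M).IsHermitian := by
  ext x y
  simp [_root_.ptrace1of3, ← hM.apply ((_, x.1), x.2) ((_, y.1), y.2)]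

end PartialTrace

section Kronecker

def kroneckerAssoc (P : Matrix A A ℂ) (Q : Matrix (B × C) (B × C) ℂ) :
    Matrix ((A × B) × C) ((A × B) × C) ℂ :=
  reindex (Equiv.prodAssoc A B C).symm (Equiv.prodAssoc A B C).symm (P ⊗ₖ Q)

lemma ptraceRight_kronecker [Fintype B] (M : Matrix A A ℂ) (N : Matrix B B ℂ) :
    ptraceRight (M ⊗ₖ N) = N.trace • M := by
  ext x y
  simp [ptraceRight, Matrix.trace, Finset.mul_sum, mul_comm]

lemma ptraceLeft_kronecker [Fintype A] (M : Matrix A A ℂ) (N : Matrix B B ℂ) :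
    ptraceLeft (M ⊗ₖ N) = M.trace • N := by
  ext x y
  simp [ptraceLeft, Matrix.trace, Finset.sum_mul]

lemma ptrace1of3_kronecker [Fintype A] (M : Matrix (A × B) (A × B) ℂ) (N : Matrix C C ℂ) :
    ptrace1of3 (M ⊗ₖ N) = ptraceLeft M ⊗ₖ N := by
  ext x y
  simp [ptrace1of3, ptraceLeft, Finset.sum_mul]

lemma ptraceRight_kroneckerAssoc [Fintype C] (P : Matrix A A ℂ) (Q : Matrix (B × C) (B × C) ℂ) :
    ptraceRight (kroneckerAssoc P Q) = P ⊗ₖ ptraceRight Q := by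
  ext x y
  simp [kroneckerAssoc, ptraceRight, Finset.mul_sum]

lemma ptrace1of3_kroneckerAssoc [Fintype A] (P : Matrix A A ℂ) (Q : Matrix (B × C) (B × C) ℂ) :
    ptrace1of3 (kroneckerAssoc P Q) = P.trace • Q := by
  ext x y
  simp [kroneckerAssoc, ptrace1of3, Matrix.trace, Finset.sum_mul]

lemma Matrix.IsHermitian.kronecker {M : Matrix A A ℂ} {N : Matrix B B ℂ} (hM : M.IsHermitian)
    (hN : N.IsHermitian) : (M ⊗ₖ N).IsHermitian := by
  rw [IsHermitian, conjTranspose_kronecker, hM.eq, hN.eq]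

lemma Matrix.IsHermitian.kroneckerAssoc {P : Matrix A A ℂ} {Q : Matrix (B × C) (B × C) ℂ}
    (hP : P.IsHermitian) (hQ : Q.IsHermitian) : (kroneckerAssoc P Q).IsHermitian := by
  rw [IsHermitian, _root_.kroneckerAssoc, conjTranspose_reindex, (hP.kronecker hQ).eq]

end Kronecker

section EntrywiseNorm

lemma mnorm_nonneg [Fintype n] (M : Matrix n n ℂ) : 0 ≤ mnorm M := by
  unfold mnorm
  positivity

lemma mnorm_add_le [Fintype n] (M N : Matrix n n ℂ) : mnorm (M + N) ≤ mnorm M + mnorm N := by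
  simp only [mnorm, ← Finset.sum_add_distrib]
  gcongr with i _ j _
  exact norm_add_le _ _

lemma mnorm_sub_le [Fintype n] (M N : Matrix n n ℂ) : mnorm (M - N) ≤ mnorm M + mnorm N := by
  simp only [mnorm, ← Finset.sum_add_distrib]
  gcongr with i _ j _
  exact norm_sub_le _ _

lemma mnorm_kronecker [Fintype A] [Fintype B] (M : Matrix A A ℂ) (N : Matrix B B ℂ) :
    mnorm (M ⊗ₖ N) = mnorm M * mnorm N := by
  simp [mnorm, Fintype.sum_prod_type, Finset.sum_mul_sum]

lemma mnorm_kroneckerAssoc [Fintype A] [Fintype B] [Fintype C] (P : Matrix A A ℂ)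
    (Q : Matrix (B × C) (B × C) ℂ) : mnorm (kroneckerAssoc P Q) = mnorm P * mnorm Q := by
  rw [← mnorm_kronecker]
  simp only [mnorm, kroneckerAssoc, reindex_apply, submatrix_apply, Equiv.symm_symm]
  exact Fintype.sum_equiv (Equiv.prodAssoc A B C) _ _ fun p =>
    Fintype.sum_equiv (Equiv.prodAssoc A B C) _ _ fun q => rfl

lemma mnorm_ptraceLeft_le [Fintype A] [Fintype B] (M : Matrix (A × B) (A × B) ℂ) :
    mnorm (ptraceLeft M) ≤ mnorm M := by
  calc mnorm (ptraceLeft M) ≤ ∑ x, ∑ y, ∑ a, ‖M (a, x) (a, y)‖ := by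
        unfold mnorm ptraceLeft
        gcongr with x _ y _
        exact norm_sum_le _ _
    _ = ∑ a, ∑ x, ∑ y, ‖M (a, x) (a, y)‖ :=
        (Finset.sum_congr rfl fun _ _ => Finset.sum_comm).trans Finset.sum_comm
    _ ≤ ∑ a, ∑ x, ∑ a', ∑ y, ‖M (a, x) (a', y)‖ := by
        gcongr with a _ x _
        exact Finset.single_le_sum (f := fun a' => ∑ y, ‖M (a, x) (a', y)‖)
          (fun _ _ => Finset.sum_nonneg fun _ _ => norm_nonneg _) (Finset.mem_univ a)
    _ = mnorm M := by simp only [mnorm, Fintype.sum_prod_type]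

end EntrywiseNorm

section MaximallyMixed

def maximallyMixed (n : Type*) [Fintype n] [DecidableEq n] : Matrix n n ℂ :=
  (Fintype.card n : ℂ)⁻¹ • 1

variable (n) [Fintype n] [DecidableEq n]

lemma trace_maximallyMixed [Nonempty n] : (maximallyMixed n).trace = 1 := by
  simp [maximallyMixed]

lemma mnorm_maximallyMixed [Nonempty n] : mnorm (maximallyMixed n) = 1 := by
  simp [maximallyMixed, mnorm, Matrix.one_apply, apply_ite, Finset.card_univ]

lemma isHermitian_maximallyMixed : (maximallyMixed n).IsHermitian := by
  simp [maximallyMixed, IsHermitian]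

end MaximallyMixed

lemma IsDensityMatrix.nonempty [Fintype n] {ρ : Matrix n n ℂ} (hρ : IsDensityMatrix ρ) :
    Nonempty n := by
  by_contra hn
  rw [not_nonempty_iff] at hn
  simpa [Matrix.trace] using hρ.2

section Spectrum

variable [Fintype n] [DecidableEq n]

lemma norm_le_mnorm_of_mem_spectrum {E : Matrix n n ℂ} {μ : ℂ} (hμ : μ ∈ spectrum ℂ E) :
    ‖μ‖ ≤ mnorm E := by
  rw [← Matrix.spectrum_toLin'] at hμ
  obtain ⟨k, hk⟩ := eigenvalue_mem_ball (Module.End.HasEigenvalue.of_mem_spectrum hμ)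
  rw [Metric.mem_closedBall, dist_eq_norm] at hk
  calc ‖μ‖ ≤ ‖E k k‖ + ‖μ - E k k‖ := norm_le_insert' _ _
    _ ≤ ‖E k k‖ + ∑ j ∈ Finset.univ.erase k, ‖E k j‖ := by gcongr
    _ = ∑ j, ‖E k j‖ := Finset.add_sum_erase _ (fun j => ‖E k j‖) (Finset.mem_univ k)
    _ ≤ mnorm E := Finset.single_le_sum (f := fun i => ∑ j, ‖E i j‖)
          (fun _ _ => Finset.sum_nonneg fun _ _ => norm_nonneg _) (Finset.mem_univ k)

lemma Matrix.IsHermitian.le_algebraMap_of_mnorm_le {E : Matrix n n ℂ} (hE : E.IsHermitian)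
    {r : ℝ} (h : mnorm E ≤ r) : E ≤ algebraMap ℝ (Matrix n n ℂ) r := by
  rw [le_algebraMap_iff_spectrum_le hE.isSelfAdjoint]
  intro x hx
  have := norm_le_mnorm_of_mem_spectrum ((spectrum.algebraMap_mem_iff ℂ).mpr hx)
  rw [Complex.coe_algebraMap, Complex.norm_real, Real.norm_eq_abs] at this
  exact (le_abs_self x).trans (this.trans h)

lemma Matrix.PosDef.exists_pos_algebraMap_le {M : Matrix n n ℂ} (hM : M.PosDef) :
    ∃ r > 0, algebraMap ℝ (Matrix n n ℂ) r ≤ M := by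
  cases isEmpty_or_nonempty n
  · exact ⟨1, one_pos, le_of_eq (by ext i; exact isEmptyElim i)⟩
  refine (CFC.exists_pos_algebraMap_le_iff hM.1.isSelfAdjoint).mpr fun x hx => ?_
  obtain ⟨i, rfl⟩ := hM.1.spectrum_real_eq_range_eigenvalues ▸ hx
  exact hM.eigenvalues_pos i

end Spectrum

section Correction

variable [Fintype A] [DecidableEq A] [Fintype C] [DecidableEq C]

def extensionCorrection (Δ₁₂ : Matrix (A × B) (A × B) ℂ) (Δ₂₃ : Matrix (B × C) (B × C) ℂ) :
    Matrix ((A × B) × C) ((A × B) × C) ℂ :=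
  (Δ₁₂ - maximallyMixed A ⊗ₖ ptraceLeft Δ₁₂) ⊗ₖ maximallyMixed C +
    kroneckerAssoc (maximallyMixed A) Δ₂₃

variable (Δ₁₂ : Matrix (A × B) (A × B) ℂ) (Δ₂₃ : Matrix (B × C) (B × C) ℂ)

lemma ptraceRight_extensionCorrection [Nonempty C] (h : ptraceLeft Δ₁₂ = ptraceRight Δ₂₃) :
    ptraceRight (extensionCorrection Δ₁₂ Δ₂₃) = Δ₁₂ := by
  rw [extensionCorrection, ptraceRight_add, ptraceRight_kronecker, ptraceRight_kroneckerAssoc,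
    trace_maximallyMixed, one_smul, h, sub_add_cancel]

lemma ptrace1of3_extensionCorrection [Nonempty A] :
    ptrace1of3 (extensionCorrection Δ₁₂ Δ₂₃) = Δ₂₃ := by
  rw [extensionCorrection, ptrace1of3_add, ptrace1of3_kronecker, ptraceLeft_sub,
    ptraceLeft_kronecker, ptrace1of3_kroneckerAssoc, trace_maximallyMixed, one_smul, one_smul,
    sub_self, zero_kronecker, zero_add]

lemma mnorm_extensionCorrection_le [Fintype B] [Nonempty A] [Nonempty C] :
    mnorm (extensionCorrection Δ₁₂ Δ₂₃) ≤ 2 * mnorm Δ₁₂ + mnorm Δ₂₃ := by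
  calc mnorm (extensionCorrection Δ₁₂ Δ₂₃)
      ≤ mnorm (Δ₁₂ - maximallyMixed A ⊗ₖ ptraceLeft Δ₁₂) + mnorm Δ₂₃ := by
        refine (mnorm_add_le _ _).trans_eq ?_
        rw [mnorm_kronecker, mnorm_kroneckerAssoc, mnorm_maximallyMixed, mnorm_maximallyMixed,
          mul_one, one_mul]
    _ ≤ mnorm Δ₁₂ + mnorm (ptraceLeft Δ₁₂) + mnorm Δ₂₃ := by
        gcongr
        refine (mnorm_sub_le _ _).trans_eq ?_
        rw [mnorm_kronecker, mnorm_maximallyMixed, one_mul]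
    _ ≤ 2 * mnorm Δ₁₂ + mnorm Δ₂₃ := by linarith [mnorm_ptraceLeft_le Δ₁₂]

variable {Δ₁₂ Δ₂₃}

lemma Matrix.IsHermitian.extensionCorrection (h₁₂ : Δ₁₂.IsHermitian) (h₂₃ : Δ₂₃.IsHermitian) :
    (_root_.extensionCorrection Δ₁₂ Δ₂₃).IsHermitian :=
  ((h₁₂.sub ((isHermitian_maximallyMixed A).kronecker h₁₂.ptraceLeft)).kronecker
    (isHermitian_maximallyMixed C)).add ((isHermitian_maximallyMixed A).kroneckerAssoc h₂₃)

end Correction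

end

theorem stmt2_general {A B C : Type*} [Fintype A] [Fintype B] [Fintype C]
    (ρ₁₂₃ : Matrix ((A × B) × C) ((A × B) × C) ℂ)
    (ρ₁₂ : Matrix (A × B) (A × B) ℂ) (ρ₂₃ : Matrix (B × C) (B × C) ℂ)
    (hpd : ρ₁₂₃.PosDef)
    (hm12 : ptraceRight ρ₁₂₃ = ρ₁₂) (hm23 : ptrace1of3 ρ₁₂₃ = ρ₂₃) :
    ∃ ε > 0, ∀ (σ₁₂ : Matrix (A × B) (A × B) ℂ) (σ₂₃ : Matrix (B × C) (B × C) ℂ),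
      IsDensityMatrix σ₁₂ → IsDensityMatrix σ₂₃ →
      ptraceLeft σ₁₂ = ptraceRight σ₂₃ →
      mnorm (ρ₁₂ - σ₁₂) + mnorm (ρ₂₃ - σ₂₃) < ε →
      ∃ σ₁₂₃ : Matrix ((A × B) × C) ((A × B) × C) ℂ,
        IsDensityMatrix σ₁₂₃ ∧ ptraceRight σ₁₂₃ = σ₁₂ ∧ ptrace1of3 σ₁₂₃ = σ₂₃ := by
  classical
  obtain ⟨c, hc, hcρ⟩ := hpd.exists_pos_algebraMap_le
  refine ⟨c / 2, by positivity, fun σ₁₂ σ₂₃ hσ₁₂ hσ₂₃ hσ hclose => ?_⟩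
  have : Nonempty A := hσ₁₂.nonempty.map Prod.fst
  have : Nonempty C := hσ₂₃.nonempty.map Prod.snd
  have hΔ : ptraceLeft (ρ₁₂ - σ₁₂) = ptraceRight (ρ₂₃ - σ₂₃) := by
    rw [ptraceLeft_sub, ptraceRight_sub, hσ, ← hm12, ← hm23, ptraceLeft_ptraceRight]
  set E := extensionCorrection (ρ₁₂ - σ₁₂) (ρ₂₃ - σ₂₃)
  have hE : E ≤ algebraMap ℝ _ c := by
    refine IsHermitian.le_algebraMap_of_mnorm_le ?_ ?_
    · exact ((hm12 ▸ hpd.1.ptraceRight).sub hσ₁₂.1.1).extensionCorrection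
        ((hm23 ▸ hpd.1.ptrace1of3).sub hσ₂₃.1.1)
    · linarith [mnorm_extensionCorrection_le (ρ₁₂ - σ₁₂) (ρ₂₃ - σ₂₃), mnorm_nonneg (ρ₂₃ - σ₂₃)]
  have h₁₂ : ptraceRight (ρ₁₂₃ - E) = σ₁₂ := by
    rw [ptraceRight_sub, hm12, ptraceRight_extensionCorrection _ _ hΔ, sub_sub_cancel]
  refine ⟨ρ₁₂₃ - E, ⟨(sub_nonneg.mpr (hE.trans hcρ)).posSemidef, ?_⟩, h₁₂, ?_⟩
  · rw [← trace_ptraceRight, h₁₂, hσ₁₂.2]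
  · rw [ptrace1of3_sub, hm23, ptrace1of3_extensionCorrection, sub_sub_cancel]

/-- If the compatible pair (ρ₁₂, ρ₂₃) has a positive definite common extension, then every
compatible pair sufficiently close to it also has a common extension. -/
theorem stmt2 {A B C : Type*} [Fintype A] [Fintype B] [Fintype C]
    (ρ₁₂₃ : Matrix ((A × B) × C) ((A × B) × C) ℂ)
    (ρ₁₂ : Matrix (A × B) (A × B) ℂ) (ρ₂₃ : Matrix (B × C) (B × C) ℂ)
    (h123 : IsDensityMatrix ρ₁₂₃) (hpd : ρ₁₂₃.PosDef)
    (h12 : IsDensityMatrix ρ₁₂) (h23 : IsDensityMatrix ρ₂₃)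
    (hm12 : ptraceRight ρ₁₂₃ = ρ₁₂) (hm23 : ptrace1of3 ρ₁₂₃ = ρ₂₃) :
    ∃ ε > 0, ∀ (σ₁₂ : Matrix (A × B) (A × B) ℂ) (σ₂₃ : Matrix (B × C) (B × C) ℂ),
      IsDensityMatrix σ₁₂ → IsDensityMatrix σ₂₃ →
      ptraceLeft σ₁₂ = ptraceRight σ₂₃ →
      mnorm (ρ₁₂ - σ₁₂) + mnorm (ρ₂₃ - σ₂₃) < ε →
      ∃ σ₁₂₃ : Matrix ((A × B) × C) ((A × B) × C) ℂ,
        IsDensityMatrix σ₁₂₃ ∧ ptraceRight σ₁₂₃ = σ₁₂ ∧ ptrace1of3 σ₁₂₃ = σ₂₃ :=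
  stmt2_general ρ₁₂₃ ρ₁₂ ρ₂₃ hpd hm12 hm23
end
end

section
/- Let ρ₂ be a rank-2 density matrix on ℂ² with distinct eigenvalues μ₁ > μ₂ > 0 and let φ₁ be a unit vector that is not an eigenvector of ρ₂. Then there exist ν₁, ν₂ > 0 and a unit vector φ₂ such that ρ₂ = ν₁|φ₁⟩⟨φ₁| + ν₂|φ₂⟩⟨φ₂|, and φ₂ is not proportional to φ₁ and is not an eigenvector of ρ₂. -/
/-!
Let `χ = (-ȳ, x̄)` be the vector orthogonal to `φ₁ = (x, y)`. Every Hermitian `2 × 2` matrix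
satisfies `⟨χ, ρχ⟩ ρ = det ρ |φ₁⟩⟨φ₁| + |ρχ⟩⟨ρχ|`. For positive definite `ρ` both `⟨χ, ρχ⟩` and
`det ρ` are positive, so `φ₂ = ρχ / ‖ρχ‖` gives the decomposition. If `φ₂` were proportional to
`φ₁` then `⟨χ, ρχ⟩ = 0`; if `ρχ` were an eigenvector then, `ρ` being injective, so would be `χ`,
and then also its orthogonal complement `φ₁`. Positive definiteness of `ρ` comes from writing the
spectral decomposition as `ρ = U diag(μ₁, μ₂) U*` with `U` unitary.
-/

open Matrix Kronecker BigOperators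
open scoped ComplexOrder
noncomputable section

theorem Complex.exists_ofReal_eq_of_pos {z : ℂ} (hz : 0 < z) : ∃ x : ℝ, 0 < x ∧ (x : ℂ) = z :=
  ⟨z.re, (Complex.pos_iff.mp hz).1, Complex.ext rfl (Complex.pos_iff.mp hz).2⟩

namespace Matrix

theorem posDef_sum_smul_vecMulVec {n K : Type*} [Fintype n] [DecidableEq n] [Field K]
    [StarRing K] [PartialOrder K] [StarOrderedRing K] (ψ : n → n → K) (μ : n → K)
    (hψ : ∀ k l, star (ψ k) ⬝ᵥ ψ l = if k = l then 1 else 0) (hμ : ∀ k, 0 < μ k) :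
    (∑ k, μ k • vecMulVec (ψ k) (star (ψ k))).PosDef := by
  set U : Matrix n n K := (of ψ)ᵀ
  have hU : Uᴴ * U = 1 := by
    ext k l
    simpa [U, mul_apply, dotProduct, one_apply] using hψ k l
  have hsum : ∑ k, μ k • vecMulVec (ψ k) (star (ψ k)) = U * diagonal μ * Uᴴ := by
    ext i j
    rw [mul_apply]
    simp [U, sum_apply, mul_diagonal, vecMulVec_apply, mul_assoc, mul_left_comm (μ _)]
  rw [hsum]
  exact (PosDef.diagonal hμ).mul_mul_conjTranspose_same
    (vecMul_injective_of_isUnit ((isUnit_iff_isUnit_det _).mpr (isUnit_det_of_left_inverse hU)))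

theorem exists_ofReal_smul_of_ne_zero {n : Type*} [Fintype n] {w : n → ℂ} (hw : w ≠ 0) :
    ∃ (t : ℝ) (u : n → ℂ), 0 < t ∧ star u ⬝ᵥ u = 1 ∧ w = (t : ℂ) • u := by
  obtain ⟨s, hs, hsw⟩ := Complex.exists_ofReal_eq_of_pos (dotProduct_star_self_pos_iff.mpr hw)
  have ht : 0 < Real.sqrt s := Real.sqrt_pos.mpr hs
  have ht' : ((Real.sqrt s : ℝ) : ℂ) ≠ 0 := by exact_mod_cast ht.ne'
  have hss : ((Real.sqrt s : ℝ) : ℂ) * (Real.sqrt s : ℂ) = s := by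
    rw [← Complex.ofReal_mul, Real.mul_self_sqrt hs.le]
  refine ⟨Real.sqrt s, ((Real.sqrt s : ℂ))⁻¹ • w, ht, ?_, by rw [smul_inv_smul₀ ht']⟩
  rw [star_smul, smul_dotProduct, dotProduct_smul, ← hsw, smul_eq_mul, smul_eq_mul, star_inv₀,
    Complex.star_def, Complex.conj_ofReal, ← hss]
  field_simp

section Perp

variable {R : Type*} [CommRing R] [StarRing R]

def perp (φ : Fin 2 → R) : Fin 2 → R := ![-star (φ 1), star (φ 0)]

@[simp]
theorem perp_eq_zero_iff {φ : Fin 2 → R} : perp φ = 0 ↔ φ = 0 := by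
  simp [perp, funext_iff, Fin.forall_fin_two, and_comm]

theorem star_perp_dotProduct_self (φ : Fin 2 → R) : star (perp φ) ⬝ᵥ φ = 0 := by
  simp only [dotProduct, perp, Pi.star_apply, Fin.sum_univ_two, cons_val_zero, cons_val_one,
    cons_val_fin_one, star_neg, star_star]
  ring

theorem eq_smul_add_smul_perp {φ : Fin 2 → R} (hφ : star φ ⬝ᵥ φ = 1) (v : Fin 2 → R) :
    v = (star φ ⬝ᵥ v) • φ + (star (perp φ) ⬝ᵥ v) • perp φ := by
  simp only [dotProduct, Fin.sum_univ_two, Pi.star_apply] at hφ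
  ext i
  fin_cases i <;>
    simp only [Fin.zero_eta, Fin.mk_one, dotProduct, perp, Pi.star_apply, Fin.sum_univ_two,
      Fin.isValue, cons_val_zero, cons_val_one, cons_val_fin_one, star_neg, star_star,
      Pi.add_apply, Pi.smul_apply, smul_eq_mul] <;>
    linear_combination (-(v _)) * hφ

theorem IsHermitian.smul_eq_det_smul_add_vecMulVec_perp {ρ : Matrix (Fin 2) (Fin 2) R}
    (hρ : ρ.IsHermitian) (φ : Fin 2 → R) :
    (star (perp φ) ⬝ᵥ ρ *ᵥ perp φ) • ρ
      = ρ.det • vecMulVec φ (star φ) + vecMulVec (ρ *ᵥ perp φ) (star (ρ *ᵥ perp φ)) := by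
  have hentry (i j) : star (ρ j i) = ρ i j := hρ.apply i j
  ext i j
  simp only [smul_apply, add_apply, vecMulVec_apply, Pi.star_apply]
  fin_cases i <;> fin_cases j <;>
    simp only [dotProduct, perp, Pi.star_apply, mulVec, Fin.sum_univ_two, Fin.isValue,
      cons_val_zero, cons_val_one, cons_val_fin_one, Fin.zero_eta, Fin.mk_one, smul_eq_mul,
      det_fin_two, star_neg, star_star, star_add, star_mul', hentry] <;>
    ring

end Perp

theorem PosDef.exists_decomposition_of_not_eigenvector {ρ : Matrix (Fin 2) (Fin 2) ℂ}
    (hρ : ρ.PosDef) {φ₁ : Fin 2 → ℂ} (hφ₁ : star φ₁ ⬝ᵥ φ₁ = 1)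
    (hne : ¬ ∃ c : ℂ, ρ *ᵥ φ₁ = c • φ₁) :
    ∃ (ν₁ ν₂ : ℝ) (φ₂ : Fin 2 → ℂ),
      0 < ν₁ ∧ 0 < ν₂ ∧ star φ₂ ⬝ᵥ φ₂ = 1 ∧
      ρ = (ν₁ : ℂ) • vecMulVec φ₁ (star φ₁) + (ν₂ : ℂ) • vecMulVec φ₂ (star φ₂) ∧
      (¬ ∃ c : ℂ, φ₂ = c • φ₁) ∧ (¬ ∃ c : ℂ, ρ *ᵥ φ₂ = c • φ₂) := by
  have hχ : perp φ₁ ≠ 0 := by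
    rw [Ne, perp_eq_zero_iff]
    rintro rfl
    simp at hφ₁
  have hscaled := hρ.isHermitian.smul_eq_det_smul_add_vecMulVec_perp φ₁
  set w := ρ *ᵥ perp φ₁ with hw_def
  obtain ⟨r, hr, hrw⟩ := Complex.exists_ofReal_eq_of_pos (hρ.dotProduct_mulVec_pos hχ)
  obtain ⟨d, hd, hdet⟩ := Complex.exists_ofReal_eq_of_pos hρ.det_pos
  have hw : w ≠ 0 := by
    rintro hw
    simp [w, hw, hr.ne'] at hrw
  obtain ⟨t, φ₂, ht, hφ₂, hwφ₂⟩ := exists_ofReal_smul_of_ne_zero hw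
  refine ⟨d / r, t ^ 2 / r, φ₂, by positivity, by positivity, hφ₂, ?_, ?_, ?_⟩
  · have hr' : (r : ℂ) ≠ 0 := by exact_mod_cast hr.ne'
    rw [← hrw, ← hdet, hwφ₂, star_smul, smul_vecMulVec, vecMulVec_smul, smul_smul,
      Complex.star_def, Complex.conj_ofReal] at hscaled
    rw [← inv_smul_smul₀ hr' ρ, hscaled]
    push_cast
    module
  · rintro ⟨c, rfl⟩
    have h : star (perp φ₁) ⬝ᵥ w = 0 := by
      rw [hwφ₂, dotProduct_smul, dotProduct_smul, star_perp_dotProduct_self, smul_zero, smul_zero]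
    exact hr.ne' (by exact_mod_cast hrw.trans h)
  · rintro ⟨c, hc⟩
    have hwc : w = c • perp φ₁ := by
      refine mulVec_injective_of_isUnit hρ.isUnit ?_
      rw [mulVec_smul, ← hw_def, hwφ₂, mulVec_smul, hc, smul_comm]
    have horth : star (perp φ₁) ⬝ᵥ ρ *ᵥ φ₁ = 0 := by
      rw [dotProduct_mulVec, ← hρ.isHermitian.eq, ← star_mulVec, ← hw_def, hwc, star_smul,
        smul_dotProduct, star_perp_dotProduct_self, smul_zero]
    refine hne ⟨star φ₁ ⬝ᵥ ρ *ᵥ φ₁, ?_⟩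
    simpa only [horth, zero_smul, add_zero] using eq_smul_add_smul_perp hφ₁ (ρ *ᵥ φ₁)

end Matrix

theorem stmt9_general (ρ : Matrix (Fin 2) (Fin 2) ℂ)
    (ψ₁ ψ₂ : Fin 2 → ℂ) (μ₁ μ₂ : ℝ)
    (hψ₁ : star ψ₁ ⬝ᵥ ψ₁ = 1) (hψ₂ : star ψ₂ ⬝ᵥ ψ₂ = 1) (hψo : star ψ₁ ⬝ᵥ ψ₂ = 0)
    (hμ : μ₁ > μ₂) (hμ₂ : 0 < μ₂)
    (hdec : ρ = (μ₁ : ℂ) • Matrix.vecMulVec ψ₁ (star ψ₁)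
              + (μ₂ : ℂ) • Matrix.vecMulVec ψ₂ (star ψ₂))
    (φ₁ : Fin 2 → ℂ) (hφ₁ : star φ₁ ⬝ᵥ φ₁ = 1)
    (hφ₁ne : ¬ ∃ c : ℂ, ρ.mulVec φ₁ = c • φ₁) :
    ∃ (ν₁ ν₂ : ℝ) (φ₂ : Fin 2 → ℂ),
      0 < ν₁ ∧ 0 < ν₂ ∧ star φ₂ ⬝ᵥ φ₂ = 1 ∧
      ρ = (ν₁ : ℂ) • Matrix.vecMulVec φ₁ (star φ₁)
          + (ν₂ : ℂ) • Matrix.vecMulVec φ₂ (star φ₂) ∧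
      (¬ ∃ c : ℂ, φ₂ = c • φ₁) ∧
      (¬ ∃ c : ℂ, ρ.mulVec φ₂ = c • φ₂) := by
  have hψ : ∀ k l, star (![ψ₁, ψ₂] k) ⬝ᵥ ![ψ₁, ψ₂] l = if k = l then 1 else 0 := by
    intro k l
    fin_cases k <;> fin_cases l <;> simp [hψ₁, hψ₂, hψo, star_dotProduct ψ₂ ψ₁]
  have hμpos : ∀ k, 0 < ![(μ₁ : ℂ), μ₂] k := by
    intro k
    fin_cases k <;> simp <;> linarith
  have hρ : ρ.PosDef := by
    simpa [hdec, Fin.sum_univ_two] using posDef_sum_smul_vecMulVec _ _ hψ hμpos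
  exact hρ.exists_decomposition_of_not_eigenvector hφ₁ hφ₁ne

/-- For a rank-2 density matrix on ℂ² with distinct eigenvalues and a unit vector φ₁ that is
not an eigenvector, there is a decomposition ρ = ν₁|φ₁⟩⟨φ₁| + ν₂|φ₂⟩⟨φ₂| with φ₂ not
proportional to φ₁ and not an eigenvector. -/
theorem stmt9 (ρ : Matrix (Fin 2) (Fin 2) ℂ) (hρ : IsDensityMatrix ρ)
    (ψ₁ ψ₂ : Fin 2 → ℂ) (μ₁ μ₂ : ℝ)
    (hψ₁ : star ψ₁ ⬝ᵥ ψ₁ = 1) (hψ₂ : star ψ₂ ⬝ᵥ ψ₂ = 1) (hψo : star ψ₁ ⬝ᵥ ψ₂ = 0)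
    (hμ : μ₁ > μ₂) (hμ₂ : 0 < μ₂)
    (hdec : ρ = (μ₁ : ℂ) • Matrix.vecMulVec ψ₁ (star ψ₁)
              + (μ₂ : ℂ) • Matrix.vecMulVec ψ₂ (star ψ₂))
    (φ₁ : Fin 2 → ℂ) (hφ₁ : star φ₁ ⬝ᵥ φ₁ = 1)
    (hφ₁ne : ¬ ∃ c : ℂ, ρ.mulVec φ₁ = c • φ₁) :
    ∃ (ν₁ ν₂ : ℝ) (φ₂ : Fin 2 → ℂ),
      0 < ν₁ ∧ 0 < ν₂ ∧ star φ₂ ⬝ᵥ φ₂ = 1 ∧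
      ρ = (ν₁ : ℂ) • Matrix.vecMulVec φ₁ (star φ₁)
          + (ν₂ : ℂ) • Matrix.vecMulVec φ₂ (star φ₂) ∧
      (¬ ∃ c : ℂ, φ₂ = c • φ₁) ∧
      (¬ ∃ c : ℂ, ρ.mulVec φ₂ = c • φ₂) :=
  stmt9_general ρ ψ₁ ψ₂ μ₁ μ₂ hψ₁ hψ₂ hψo hμ hμ₂ hdec φ₁ hφ₁ hφ₁ne
end
end

section
/- Classical maximum-entropy extension: with the notation of the classical extension formula, for any probability density σ on X×Y×Z with marginals ∑_z σ = ρ₁₂ and ∑ₓ σ = ρ₂₃, the Shannon entropy satisfies H(σ) ≤ H(ρ₁₂) + H(ρ₂₃) − H(ρ₂), and equality holds for σ = ρ₁₂₃ defined by ρ₁₂₃(x,y,z) = ρ₁₂(x,y)ρ₂₃(y,z)/ρ₂(y). -/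
open Matrix Kronecker BigOperators
open scoped ComplexOrder
noncomputable section

/-- Shannon entropy of a finitely supported density. -/
def shannon {ι : Type*} [Fintype ι] (p : ι → ℝ) : ℝ := -∑ i, p i * Real.log (p i)

/-!
The conditional product `ρ₁₂₃ = ρ₁₂ ρ₂₃ / ρ₂` has marginals `ρ₁₂` and `ρ₂₃`, and its logarithm
splits as `log ρ₁₂ + log ρ₂₃ - log ρ₂` wherever an extension `σ` of the two marginals has mass.
Hence the cross entropy `-∑ σ log ρ₁₂₃` equals `H(ρ₁₂) + H(ρ₂₃) - H(ρ₂)` for every such `σ`,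
including `σ = ρ₁₂₃` itself, and Gibbs' inequality bounds `H(σ)` by this cross entropy.
-/

open Finset

lemma mul_log_sub_mul_log_le {a b : ℝ} (ha : 0 ≤ a) (hb : 0 ≤ b) (hab : 0 < a → 0 < b) :
    a * Real.log b - a * Real.log a ≤ b - a := by
  rcases ha.eq_or_lt with rfl | ha
  · simpa using hb
  · have hb := hab ha
    calc a * Real.log b - a * Real.log a = a * Real.log (b / a) := by
          rw [Real.log_div hb.ne' ha.ne']; ring
      _ ≤ a * (b / a - 1) := by gcongr; exact Real.log_le_sub_one_of_pos (div_pos hb ha)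
      _ = b - a := by field_simp

lemma sum_mul_log_le_sum_mul_log {ι : Type*} [Fintype ι] {a b : ι → ℝ} (ha : ∀ i, 0 ≤ a i)
    (hb : ∀ i, 0 ≤ b i) (hab : ∀ i, 0 < a i → 0 < b i) (hs : ∑ i, b i ≤ ∑ i, a i) :
    ∑ i, a i * Real.log (b i) ≤ ∑ i, a i * Real.log (a i) := by
  have key : ∑ i, (a i * Real.log (b i) - a i * Real.log (a i)) ≤ ∑ i, (b i - a i) :=
    sum_le_sum fun i _ => mul_log_sub_mul_log_le (ha i) (hb i) (hab i)
  rw [sum_sub_distrib, sum_sub_distrib] at key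
  linarith

def condProd {X Y Z : Type*} (ρ₁₂ : X × Y → ℝ) (ρ₂₃ : Y × Z → ℝ) (ρ₂ : Y → ℝ)
    (p : X × Y × Z) : ℝ :=
  if 0 < ρ₂ p.2.1 then ρ₁₂ (p.1, p.2.1) * ρ₂₃ (p.2.1, p.2.2) / ρ₂ p.2.1 else 0

section Extension

variable {X Y Z : Type*} {σ : X × Y × Z → ℝ} {ρ₁₂ : X × Y → ℝ} {ρ₂₃ : Y × Z → ℝ} {ρ₂ : Y → ℝ}

lemma sum_eq_of_marginal_fst [Fintype X] [Fintype Y] [Fintype Z]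
    (h₁ : ∀ x y, ∑ z, σ (x, y, z) = ρ₁₂ (x, y)) :
    ∑ p, σ p = ∑ q, ρ₁₂ q := by
  simp only [Fintype.sum_prod_type, h₁]

lemma sum_mul_comp_fst_of_marginal [Fintype X] [Fintype Y] [Fintype Z]
    (h₁ : ∀ x y, ∑ z, σ (x, y, z) = ρ₁₂ (x, y))
    (f : X × Y → ℝ) : ∑ p, σ p * f (p.1, p.2.1) = ∑ q, ρ₁₂ q * f q := by
  simp only [Fintype.sum_prod_type, ← sum_mul, h₁]

lemma sum_mul_comp_snd_of_marginal [Fintype X] [Fintype Y] [Fintype Z]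
    (h₂ : ∀ y z, ∑ x, σ (x, y, z) = ρ₂₃ (y, z))
    (f : Y × Z → ℝ) : ∑ p, σ p * f (p.2.1, p.2.2) = ∑ q, ρ₂₃ q * f q := by
  rw [Fintype.sum_prod_type, sum_comm]
  simp only [Fintype.sum_prod_type, ← sum_mul, h₂]

lemma sum_mul_comp_of_marginal [Fintype X] [Fintype Y] [Fintype Z]
    (h₁ : ∀ x y, ∑ z, σ (x, y, z) = ρ₁₂ (x, y))
    (h₁₂ : ∀ y, ∑ x, ρ₁₂ (x, y) = ρ₂ y) (f : Y → ℝ) :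
    ∑ p, σ p * f p.2.1 = ∑ y, ρ₂ y * f y := by
  simp only [Fintype.sum_prod_type, ← sum_mul, h₁]
  rw [sum_comm]
  simp only [← sum_mul, h₁₂]

lemma pos_of_marginal [Fintype X] [Fintype Z]
    (hσ : ∀ p, 0 ≤ σ p) (h₁ : ∀ x y, ∑ z, σ (x, y, z) = ρ₁₂ (x, y))
    (h₂ : ∀ y z, ∑ x, σ (x, y, z) = ρ₂₃ (y, z)) (h₁₂ : ∀ y, ∑ x, ρ₁₂ (x, y) = ρ₂ y)
    {x : X} {y : Y} {z : Z} (hp : 0 < σ (x, y, z)) :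
    0 < ρ₁₂ (x, y) ∧ 0 < ρ₂₃ (y, z) ∧ 0 < ρ₂ y := by
  have h₁₂p : 0 < ρ₁₂ (x, y) := h₁ x y ▸ sum_pos' (fun _ _ => hσ _) ⟨z, mem_univ _, hp⟩
  have h₁₂n : ∀ x', 0 ≤ ρ₁₂ (x', y) := fun x' => h₁ x' y ▸ sum_nonneg fun _ _ => hσ _
  exact ⟨h₁₂p, h₂ y z ▸ sum_pos' (fun _ _ => hσ _) ⟨x, mem_univ _, hp⟩,
    h₁₂ y ▸ sum_pos' (fun x' _ => h₁₂n x') ⟨x, mem_univ _, h₁₂p⟩⟩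

lemma condProd_pos_of_marginal [Fintype X] [Fintype Z]
    (hσ : ∀ p, 0 ≤ σ p) (h₁ : ∀ x y, ∑ z, σ (x, y, z) = ρ₁₂ (x, y))
    (h₂ : ∀ y z, ∑ x, σ (x, y, z) = ρ₂₃ (y, z)) (h₁₂ : ∀ y, ∑ x, ρ₁₂ (x, y) = ρ₂ y)
    {p : X × Y × Z} (hp : 0 < σ p) : 0 < condProd ρ₁₂ ρ₂₃ ρ₂ p := by
  obtain ⟨h₁₂p, h₂₃p, h₂p⟩ := pos_of_marginal hσ h₁ h₂ h₁₂ hp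
  rw [condProd, if_pos h₂p]
  positivity

lemma condProd_nonneg (h₁₂n : ∀ q, 0 ≤ ρ₁₂ q) (h₂₃n : ∀ q, 0 ≤ ρ₂₃ q) (p : X × Y × Z) :
    0 ≤ condProd ρ₁₂ ρ₂₃ ρ₂ p := by
  unfold condProd
  split_ifs with h
  · exact div_nonneg (mul_nonneg (h₁₂n _) (h₂₃n _)) h.le
  · exact le_rfl

lemma sum_condProd_fst [Fintype X] [Fintype Z]
    (h₁₂n : ∀ q, 0 ≤ ρ₁₂ q) (h₁₂ : ∀ y, ∑ x, ρ₁₂ (x, y) = ρ₂ y)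
    (h₂₃ : ∀ y, ∑ z, ρ₂₃ (y, z) = ρ₂ y) (x : X) (y : Y) :
    ∑ z, condProd ρ₁₂ ρ₂₃ ρ₂ (x, y, z) = ρ₁₂ (x, y) := by
  by_cases hy : 0 < ρ₂ y
  · simp only [condProd, if_pos hy, ← sum_div, ← mul_sum, h₂₃, mul_div_cancel_right₀ _ hy.ne']
  · have hle : ρ₁₂ (x, y) ≤ ρ₂ y := h₁₂ y ▸ single_le_sum (fun i _ => h₁₂n (i, y)) (mem_univ x)
    have hzero : ρ₁₂ (x, y) = 0 := by linarith [h₁₂n (x, y)]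
    simp [condProd, hy, hzero]

lemma sum_condProd_snd [Fintype X] [Fintype Z]
    (h₂₃n : ∀ q, 0 ≤ ρ₂₃ q) (h₁₂ : ∀ y, ∑ x, ρ₁₂ (x, y) = ρ₂ y)
    (h₂₃ : ∀ y, ∑ z, ρ₂₃ (y, z) = ρ₂ y) (y : Y) (z : Z) :
    ∑ x, condProd ρ₁₂ ρ₂₃ ρ₂ (x, y, z) = ρ₂₃ (y, z) := by
  by_cases hy : 0 < ρ₂ y
  · simp only [condProd, if_pos hy, ← sum_div, ← sum_mul, h₁₂, mul_div_cancel_left₀ _ hy.ne']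
  · have hle : ρ₂₃ (y, z) ≤ ρ₂ y := h₂₃ y ▸ single_le_sum (fun i _ => h₂₃n (y, i)) (mem_univ z)
    have hzero : ρ₂₃ (y, z) = 0 := by linarith [h₂₃n (y, z)]
    simp [condProd, hy, hzero]

lemma sum_mul_log_condProd [Fintype X] [Fintype Y] [Fintype Z]
    (hσ : ∀ p, 0 ≤ σ p) (h₁ : ∀ x y, ∑ z, σ (x, y, z) = ρ₁₂ (x, y))
    (h₂ : ∀ y z, ∑ x, σ (x, y, z) = ρ₂₃ (y, z)) (h₁₂ : ∀ y, ∑ x, ρ₁₂ (x, y) = ρ₂ y) :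
    ∑ p, σ p * Real.log (condProd ρ₁₂ ρ₂₃ ρ₂ p) =
      ∑ q, ρ₁₂ q * Real.log (ρ₁₂ q) + ∑ q, ρ₂₃ q * Real.log (ρ₂₃ q)
        - ∑ y, ρ₂ y * Real.log (ρ₂ y) := by
  have split : ∀ p, σ p * Real.log (condProd ρ₁₂ ρ₂₃ ρ₂ p) =
      σ p * Real.log (ρ₁₂ (p.1, p.2.1)) + σ p * Real.log (ρ₂₃ (p.2.1, p.2.2))
        - σ p * Real.log (ρ₂ p.2.1) := by
    rintro ⟨x, y, z⟩
    rcases (hσ (x, y, z)).eq_or_lt with h | h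
    · simp [← h]
    obtain ⟨h₁₂p, h₂₃p, h₂p⟩ := pos_of_marginal hσ h₁ h₂ h₁₂ h
    rw [condProd, if_pos h₂p, Real.log_div (by positivity) h₂p.ne',
      Real.log_mul h₁₂p.ne' h₂₃p.ne']
    ring
  rw [sum_congr rfl fun p _ => split p, sum_sub_distrib, sum_add_distrib]
  simp only [sum_mul_comp_fst_of_marginal h₁ fun q => Real.log (ρ₁₂ q),
    sum_mul_comp_snd_of_marginal h₂ fun q => Real.log (ρ₂₃ q),
    sum_mul_comp_of_marginal h₁ h₁₂ fun y => Real.log (ρ₂ y)]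

end Extension

theorem stmt19_general {X Y Z : Type*} [Fintype X] [Fintype Y] [Fintype Z]
    (ρ₁₂ : X × Y → ℝ) (ρ₂₃ : Y × Z → ℝ)
    (h12n : ∀ p, 0 ≤ ρ₁₂ p) (h23n : ∀ p, 0 ≤ ρ₂₃ p)
    (hcomp : ∀ y, ∑ x, ρ₁₂ (x, y) = ∑ z, ρ₂₃ (y, z))
    (ρ₂ : Y → ℝ) (hρ₂ : ρ₂ = fun y => ∑ x, ρ₁₂ (x, y))
    (ρ₁₂₃ : X × Y × Z → ℝ)
    (hdef : ρ₁₂₃ = fun p =>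
      if 0 < ρ₂ p.2.1 then ρ₁₂ (p.1, p.2.1) * ρ₂₃ (p.2.1, p.2.2) / ρ₂ p.2.1 else 0) :
    (∀ σ : X × Y × Z → ℝ, (∀ p, 0 ≤ σ p) → (∑ p, σ p = 1) →
      (∀ x y, ∑ z, σ (x, y, z) = ρ₁₂ (x, y)) →
      (∀ y z, ∑ x, σ (x, y, z) = ρ₂₃ (y, z)) →
      shannon σ ≤ shannon ρ₁₂ + shannon ρ₂₃ - shannon ρ₂) ∧
    shannon ρ₁₂₃ = shannon ρ₁₂ + shannon ρ₂₃ - shannon ρ₂ := by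
  obtain rfl : ρ₁₂₃ = condProd ρ₁₂ ρ₂₃ ρ₂ := hdef
  have h₁₂ : ∀ y, ∑ x, ρ₁₂ (x, y) = ρ₂ y := fun y => by rw [hρ₂]
  have h₂₃ : ∀ y, ∑ z, ρ₂₃ (y, z) = ρ₂ y := fun y => by rw [← hcomp, h₁₂]
  have hm₁ := sum_condProd_fst h12n h₁₂ h₂₃
  have hm₂ := sum_condProd_snd h23n h₁₂ h₂₃
  refine ⟨fun σ hσ _ h₁ h₂ => ?_, ?_⟩
  · have hgibbs := sum_mul_log_le_sum_mul_log hσ (condProd_nonneg h12n h23n)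
      (fun _ => condProd_pos_of_marginal hσ h₁ h₂ h₁₂)
      (by rw [sum_eq_of_marginal_fst h₁, sum_eq_of_marginal_fst hm₁])
    rw [sum_mul_log_condProd hσ h₁ h₂ h₁₂] at hgibbs
    unfold shannon
    linarith
  · have hcross := sum_mul_log_condProd (condProd_nonneg h12n h23n) hm₁ hm₂ h₁₂
    unfold shannon
    linarith

/-- Any extension σ of ρ₁₂ and ρ₂₃ satisfies H(σ) ≤ H(ρ₁₂) + H(ρ₂₃) - H(ρ₂), with
equality for the classical conditional-product extension. -/
theorem stmt19 {X Y Z : Type*} [Fintype X] [Fintype Y] [Fintype Z]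
    (ρ₁₂ : X × Y → ℝ) (ρ₂₃ : Y × Z → ℝ)
    (h12n : ∀ p, 0 ≤ ρ₁₂ p) (h23n : ∀ p, 0 ≤ ρ₂₃ p)
    (h12s : ∑ p, ρ₁₂ p = 1) (h23s : ∑ p, ρ₂₃ p = 1)
    (hcomp : ∀ y, ∑ x, ρ₁₂ (x, y) = ∑ z, ρ₂₃ (y, z))
    (ρ₂ : Y → ℝ) (hρ₂ : ρ₂ = fun y => ∑ x, ρ₁₂ (x, y))
    (ρ₁₂₃ : X × Y × Z → ℝ)
    (hdef : ρ₁₂₃ = fun p =>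
      if 0 < ρ₂ p.2.1 then ρ₁₂ (p.1, p.2.1) * ρ₂₃ (p.2.1, p.2.2) / ρ₂ p.2.1 else 0) :
    (∀ σ : X × Y × Z → ℝ, (∀ p, 0 ≤ σ p) → (∑ p, σ p = 1) →
      (∀ x y, ∑ z, σ (x, y, z) = ρ₁₂ (x, y)) →
      (∀ y z, ∑ x, σ (x, y, z) = ρ₂₃ (y, z)) →
      shannon σ ≤ shannon ρ₁₂ + shannon ρ₂₃ - shannon ρ₂) ∧
    shannon ρ₁₂₃ = shannon ρ₁₂ + shannon ρ₂₃ - shannon ρ₂ :=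
  stmt19_general ρ₁₂ ρ₂₃ h12n h23n hcomp ρ₂ hρ₂ ρ₁₂₃ hdef
end
end
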